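/- arXiv:math/0505189 — 5 statements merged into one kernel-verified Lean document; each statement's English description precedes it below -/
import Mathlib

section
/- Let A₁ be a unital C*-algebra admitting a tracial state, B₁ a C*-subalgebra of A₁, A₂ a unital C*-algebra admitting a tracial state, and f: A₁ → A₂ a unital *-homomorphism. Let B₂ = f(B₁). If the pair (A₁, B₁) has Property (T), then the pair (A₂, B₂) has Property (T). -/
noncomputable section

open scoped ENNReal ComplexOrder

/-- Property (T) for a unital *-algebra `A` over ℂ: there are a finite set `F ⊆ A` and
`ε > 0` such that every Hilbert bimodule over `A` (a Hilbert space with commuting unital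
*-representations of `A` and of the opposite algebra `Aᵐᵒᵖ`) having an `(F, ε)`-central unit
vector has a nonzero central vector. -/
def AlgPropertyT (A : Type) [Ring A] [StarRing A] [Algebra ℂ A] [StarModule ℂ A] : Prop :=
  ∃ (F : Finset A) (ε : ℝ), 0 < ε ∧
    ∀ (H : Type) [NormedAddCommGroup H] [InnerProductSpace ℂ H] [CompleteSpace H]
      (π : A →⋆ₐ[ℂ] (H →L[ℂ] H)) (ρ : Aᵐᵒᵖ →⋆ₐ[ℂ] (H →L[ℂ] H)),
      (∀ (a : A) (b : Aᵐᵒᵖ), Commute (π a) (ρ b)) →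
      (∃ ξ : H, ‖ξ‖ = 1 ∧ ∀ y ∈ F, ‖π y ξ - ρ (MulOpposite.op y) ξ‖ < ε) →
      ∃ η : H, η ≠ 0 ∧ ∀ x : A, π x η = ρ (MulOpposite.op x) η

/-- Property (T) for a pair `(A, B)`, where `B` is a *-subalgebra of `A` (given as the
subset of its elements): every Hilbert bimodule over `A` with an `(F, ε)`-central unit
vector has a nonzero `B`-central vector. -/
def AlgPairPropertyT (A : Type) [Ring A] [StarRing A] [Algebra ℂ A] [StarModule ℂ A]
    (B : Set A) : Prop :=
  ∃ (F : Finset A) (ε : ℝ), 0 < ε ∧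
    ∀ (H : Type) [NormedAddCommGroup H] [InnerProductSpace ℂ H] [CompleteSpace H]
      (π : A →⋆ₐ[ℂ] (H →L[ℂ] H)) (ρ : Aᵐᵒᵖ →⋆ₐ[ℂ] (H →L[ℂ] H)),
      (∀ (a : A) (b : Aᵐᵒᵖ), Commute (π a) (ρ b)) →
      (∃ ξ : H, ‖ξ‖ = 1 ∧ ∀ y ∈ F, ‖π y ξ - ρ (MulOpposite.op y) ξ‖ < ε) →
      ∃ η : H, η ≠ 0 ∧ ∀ b ∈ B, π b η = ρ (MulOpposite.op b) η

/-- A tracial state on a unital complex *-algebra. -/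
def IsTracialState (A : Type) [Ring A] [StarRing A] [Algebra ℂ A] (τ : A →ₗ[ℂ] ℂ) : Prop :=
  τ 1 = 1 ∧ (∀ x : A, 0 ≤ τ (star x * x)) ∧ ∀ x y : A, τ (x * y) = τ (y * x)

/-!
A bimodule over `A₂` pulls back along `f` (via `π ∘ f` and `ρ ∘ fᵒᵖ`) to a bimodule over `A₁`
on the same Hilbert space. An `(F, ε)`-central vector of the pullback is an `(f(F), ε)`-central
vector of the original, and a `B₁`-central vector of the pullback is `f(B₁)`-central, so the
witnesses `(F, ε)` for `(A₁, B₁)` give the witnesses `(f(F), ε)` for `(A₂, f(B₁))`.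
-/

namespace StarAlgHom

variable {R A B : Type*} [CommSemiring R] [Semiring A] [Algebra R A] [StarMul A]
  [Semiring B] [Algebra R B] [StarMul B]

def op (f : A →⋆ₐ[R] B) : Aᵐᵒᵖ →⋆ₐ[R] Bᵐᵒᵖ :=
  { AlgHom.op f.toAlgHom with
    map_star' := fun a => congrArg MulOpposite.op (map_star f a.unop) }

end StarAlgHom

theorem AlgPairPropertyT.image {A₁ A₂ : Type} [Ring A₁] [StarRing A₁] [Algebra ℂ A₁]
    [StarModule ℂ A₁] [Ring A₂] [StarRing A₂] [Algebra ℂ A₂] [StarModule ℂ A₂]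
    {B : Set A₁} (hT : AlgPairPropertyT A₁ B) (f : A₁ →⋆ₐ[ℂ] A₂) :
    AlgPairPropertyT A₂ (f '' B) := by
  classical
  obtain ⟨F, ε, hε, hF⟩ := hT
  refine ⟨F.image f, ε, hε, fun H _ _ _ π ρ hcomm ⟨ξ, hξ, hξF⟩ => ?_⟩
  obtain ⟨η, hη, hηB⟩ := hF H (π.comp f) (ρ.comp f.op) (fun a b => hcomm (f a) (f.op b))
    ⟨ξ, hξ, fun y hy => hξF (f y) (Finset.mem_image_of_mem f hy)⟩
  exact ⟨η, hη, Set.forall_mem_image.2 hηB⟩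

theorem algPairPropertyT_of_starAlgHom_general
    (A₁ : Type) [NormedRing A₁] [StarRing A₁] [NormedAlgebra ℂ A₁]
    [StarModule ℂ A₁]
    (A₂ : Type) [NormedRing A₂] [StarRing A₂] [NormedAlgebra ℂ A₂]
    [StarModule ℂ A₂]
    (B₁ : StarSubalgebra ℂ A₁)
    (f : A₁ →⋆ₐ[ℂ] A₂)
    (hT : AlgPairPropertyT A₁ (B₁ : Set A₁)) :
    AlgPairPropertyT A₂ (f '' (B₁ : Set A₁)) :=
  hT.image f

/-- If `(A₁, B₁)` is a pair consisting of a unital C*-algebra admitting a tracial state and a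
C*-subalgebra, `f : A₁ → A₂` is a unital *-homomorphism into a unital C*-algebra admitting a
tracial state, and `B₂ = f(B₁)`, then Property (T) for `(A₁, B₁)` implies Property (T) for
`(A₂, B₂)`. -/
theorem algPairPropertyT_of_starAlgHom
    (A₁ : Type) [NormedRing A₁] [StarRing A₁] [CStarRing A₁] [NormedAlgebra ℂ A₁]
    [StarModule ℂ A₁] [CompleteSpace A₁]
    (A₂ : Type) [NormedRing A₂] [StarRing A₂] [CStarRing A₂] [NormedAlgebra ℂ A₂]
    [StarModule ℂ A₂] [CompleteSpace A₂]
    (hτ₁ : ∃ τ : A₁ →ₗ[ℂ] ℂ, IsTracialState A₁ τ)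
    (hτ₂ : ∃ τ : A₂ →ₗ[ℂ] ℂ, IsTracialState A₂ τ)
    (B₁ : StarSubalgebra ℂ A₁) (hB₁ : IsClosed (B₁ : Set A₁))
    (f : A₁ →⋆ₐ[ℂ] A₂)
    (hT : AlgPairPropertyT A₁ (B₁ : Set A₁)) :
    AlgPairPropertyT A₂ (f '' (B₁ : Set A₁)) :=
  algPairPropertyT_of_starAlgHom_general A₁ A₂ B₁ f hT
end
end

section
/- Let 𝓗 be a complex Hilbert space and (Uᵢ) a sequence of unitary operators on 𝓗 such that ⟨Uᵢ η₁, η₂⟩ → 0 as i → ∞ for all η₁, η₂ ∈ 𝓗. If K is a finite-dimensional subspace of 𝓗 such that Uᵢ(K) ⊆ K for all i, then K = {0}. -/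
/-! Each `Uᵢ ξ` with `ξ ∈ K` stays in `K` and has norm `‖ξ‖`. Its coefficients against a
finite orthonormal basis of `K` tend to `0`, so `Uᵢ ξ → 0` in norm, forcing `‖ξ‖ = 0`. -/

open Filter Topology

theorem tendsto_zero_of_forall_inner_tendsto_zero {𝕜 E ι : Type*} [RCLike 𝕜]
    [NormedAddCommGroup E] [InnerProductSpace 𝕜 E] [FiniteDimensional 𝕜 E]
    {l : Filter ι} {x : ι → E} (h : ∀ v : E, Tendsto (fun i => inner 𝕜 v (x i)) l (𝓝 0)) :
    Tendsto x l (𝓝 0) := by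
  let b := stdOrthonormalBasis 𝕜 E
  have hcoord : Tendsto (fun i => ∑ j, inner 𝕜 (b j) (x i) • b j) l (𝓝 (∑ j, (0 : 𝕜) • b j)) :=
    tendsto_finsetSum _ fun j _ => (h (b j)).smul_const (b j)
  simpa only [b.sum_repr', zero_smul, Finset.sum_const_zero] using hcoord

open Filter in
theorem finiteDimensional_invariant_subspace_eq_bot_of_coefficients_tendsto_zero_general
    (H : Type) [NormedAddCommGroup H] [InnerProductSpace ℂ H]
    (U : ℕ → (H ≃ₗᵢ[ℂ] H))
    (hU : ∀ η₁ η₂ : H, Tendsto (fun i => (inner ℂ η₂ (U i η₁) : ℂ)) atTop (nhds 0))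
    (K : Submodule ℂ H) (hK : FiniteDimensional ℂ K)
    (hinv : ∀ i : ℕ, ∀ ξ ∈ K, U i ξ ∈ K) :
    K = ⊥ := by
  refine (Submodule.eq_bot_iff K).mpr fun ξ hξ => ?_
  have hUξ : Tendsto (fun i => (⟨U i ξ, hinv i ξ hξ⟩ : K)) atTop (𝓝 0) :=
    tendsto_zero_of_forall_inner_tendsto_zero fun v => hU ξ v
  have hnorm : Tendsto (fun _ : ℕ => ‖ξ‖) atTop (𝓝 0) := by
    simpa only [Submodule.coe_norm, LinearIsometryEquiv.norm_map, norm_zero]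
      using hUξ.norm
  exact norm_eq_zero.mp (tendsto_nhds_unique tendsto_const_nhds hnorm)

open Filter in
/-- If `(Uᵢ)` is a sequence of unitary operators whose matrix coefficients all tend to `0`,
then the only finite-dimensional subspace invariant under all the `Uᵢ` is the zero
subspace. -/
theorem finiteDimensional_invariant_subspace_eq_bot_of_coefficients_tendsto_zero
    (H : Type) [NormedAddCommGroup H] [InnerProductSpace ℂ H] [CompleteSpace H]
    (U : ℕ → (H ≃ₗᵢ[ℂ] H))
    (hU : ∀ η₁ η₂ : H, Tendsto (fun i => (inner ℂ η₂ (U i η₁) : ℂ)) atTop (nhds 0))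
    (K : Submodule ℂ H) (hK : FiniteDimensional ℂ K)
    (hinv : ∀ i : ℕ, ∀ ξ ∈ K, U i ξ ∈ K) :
    K = ⊥ :=
  finiteDimensional_invariant_subspace_eq_bot_of_coefficients_tendsto_zero_general H U hU K hK hinv
end

section
/- Let A be a unital C*-algebra that admits no tracial state. Then A has Property (T). -/
/-!
If `A` fails Property (T), then for every finite `F ⊆ A` and `ε > 0` some Hilbert bimodule has
an `(F ∪ F*, ε / 2)`-central unit vector `ξ`. Since `π x ξ ≈ ρ(xᵒᵖ) ξ`, `ρ(xᵒᵖ)* = ρ((x*)ᵒᵖ)`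
and `ρ` commutes with `π`, the vector state `a ↦ ⟪ξ, π a ξ⟫` satisfies
`|φ(xy) - φ(yx)| ≤ ε ‖y‖` for `x ∈ F`. These almost tracial states lie in the weak-* compact
set of states, and by the finite intersection property some state is tracial.
-/

noncomputable section

open scoped ENNReal ComplexOrder

section States

variable {A : Type} [NormedRing A] [NormedAlgebra ℂ A]

variable (A) in
/-- On a C*-algebra the norm bound is automatic (`‖φ‖ = φ 1` for positive `φ`); imposing it
makes weak-* compactness a direct consequence of Banach–Alaoglu. -/
def stateSpace [StarRing A] : Set (WeakDual ℂ A) :=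
  {φ | ‖WeakDual.toStrongDual φ‖ ≤ 1 ∧ φ 1 = 1 ∧ ∀ x, 0 ≤ φ (star x * x)}

def almostTracialAt (x : A) (ε : ℝ) : Set (WeakDual ℂ A) :=
  {φ | ∀ y, ‖φ (x * y) - φ (y * x)‖ ≤ ε * ‖y‖}

theorem isCompact_stateSpace [StarRing A] : IsCompact (stateSpace A) := by
  have h1 : IsClosed {φ : WeakDual ℂ A | φ 1 = 1} :=
    isClosed_eq (WeakDual.eval_continuous 1) continuous_const
  have hpos : IsClosed {φ : WeakDual ℂ A | ∀ x, 0 ≤ φ (star x * x)} := by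
    simp only [Set.ofPred_forall]
    exact isClosed_iInter fun x => isClosed_le continuous_const (WeakDual.eval_continuous _)
  simpa only [stateSpace, Set.ofPred_and, Set.inter_assoc, Metric.closedBall,
    Set.preimage_ofPred_eq, dist_zero_right] using
    (WeakDual.isCompact_closedBall (0 : StrongDual ℂ A) 1).inter_right (h1.inter hpos)

theorem isClosed_almostTracialAt (x : A) (ε : ℝ) : IsClosed (almostTracialAt x ε) := by
  simp only [almostTracialAt, Set.ofPred_forall]
  exact isClosed_iInter fun y => isClosed_le
    ((WeakDual.eval_continuous _).sub (WeakDual.eval_continuous _)).norm continuous_const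

theorem almostTracialAt_mono {x : A} {ε δ : ℝ} (h : ε ≤ δ) :
    almostTracialAt x ε ⊆ almostTracialAt x δ :=
  fun _ hφ y => (hφ y).trans (by gcongr)

theorem apply_mul_comm_of_mem_iInter_almostTracialAt {x : A} {φ : WeakDual ℂ A}
    (hφ : φ ∈ ⋂ n : ℕ, almostTracialAt x (1 / (n + 1))) (y : A) : φ (x * y) = φ (y * x) := by
  have hbound : ∀ n : ℕ, ‖φ (x * y) - φ (y * x)‖ ≤ 1 / (n + 1) * ‖y‖ :=
    fun n => Set.mem_iInter.1 hφ n y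
  have hlim := tendsto_one_div_add_atTop_nhds_zero_nat.mul_const ‖y‖
  rw [zero_mul] at hlim
  exact sub_eq_zero.1 <| norm_le_zero_iff.1 <| ge_of_tendsto' hlim hbound

theorem exists_isTracialState_of_forall_almostTracial [StarRing A]
    (h : ∀ (F : Finset A) (ε : ℝ), 0 < ε →
      ∃ φ ∈ stateSpace A, ∀ x ∈ F, φ ∈ almostTracialAt x ε) :
    ∃ τ : A →ₗ[ℂ] ℂ, IsTracialState A τ := by
  classical
  obtain ⟨τ, ⟨-, hτ1, hτpos⟩, hτtr⟩ := isCompact_stateSpace.inter_iInter_nonempty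
    (fun i : A × ℕ => almostTracialAt i.1 (1 / (i.2 + 1)))
    (fun i => isClosed_almostTracialAt _ _) fun u => by
      obtain ⟨φ, hφ, hφtr⟩ := h (u.image Prod.fst) (1 / (u.sup Prod.snd + 1)) (by positivity)
      refine ⟨φ, hφ, Set.mem_iInter₂.2 fun i hi => almostTracialAt_mono ?_ <|
        hφtr _ (Finset.mem_image_of_mem _ hi)⟩
      gcongr
      exact_mod_cast Finset.le_sup hi
  refine ⟨τ, hτ1, hτpos, fun x y => apply_mul_comm_of_mem_iInter_almostTracialAt ?_ y⟩
  exact Set.mem_iInter.2 fun n => Set.mem_iInter.1 hτtr (x, n)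

end States

section VectorState

open scoped CStarAlgebra

variable {A H : Type} [CStarAlgebra A]
  [NormedAddCommGroup H] [InnerProductSpace ℂ H] [CompleteSpace H]

def vectorState (π : A →⋆ₐ[ℂ] (H →L[ℂ] H)) (ξ : H) : WeakDual ℂ A :=
  StrongDual.toWeakDual <|
    (innerSL ℂ ξ).comp <| (ContinuousLinearMap.apply ℂ H ξ).comp
      ⟨(π : A →ₐ[ℂ] (H →L[ℂ] H)).toLinearMap, map_continuous π⟩

variable (π : A →⋆ₐ[ℂ] (H →L[ℂ] H)) (ξ : H)

theorem StarAlgHom.norm_apply_apply_le (a : A) (v : H) : ‖π a v‖ ≤ ‖a‖ * ‖v‖ :=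
  (π a).le_of_opNorm_le (NonUnitalStarAlgHom.norm_apply_le π a) v

@[simp]
theorem vectorState_apply (a : A) : vectorState π ξ a = inner ℂ ξ (π a ξ) := rfl

theorem vectorState_mem_stateSpace (hξ : ‖ξ‖ = 1) : vectorState π ξ ∈ stateSpace A := by
  refine ⟨ContinuousLinearMap.opNorm_le_bound _ zero_le_one fun a => ?_, ?_, fun x => ?_⟩
  · calc ‖inner ℂ ξ (π a ξ)‖ ≤ ‖ξ‖ * (‖a‖ * ‖ξ‖) :=
          (norm_inner_le_norm _ _).trans (by gcongr; exact π.norm_apply_apply_le a ξ)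
      _ = 1 * ‖a‖ := by rw [hξ]; ring
  · simp [inner_self_eq_norm_sq_to_K, hξ]
  · rw [vectorState_apply, map_mul, map_star, mul_apply_eq_comp,
      ContinuousLinearMap.star_eq_adjoint, ContinuousLinearMap.adjoint_inner_right,
      inner_self_eq_norm_sq_to_K]
    positivity

variable {π} (ρ : Aᵐᵒᵖ →⋆ₐ[ℂ] (H →L[ℂ] H))

theorem vectorState_mul_sub_mul (hcomm : ∀ (a : A) (b : Aᵐᵒᵖ), Commute (π a) (ρ b)) (x y : A) :
    vectorState π ξ (x * y) - vectorState π ξ (y * x) =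
      inner ℂ (π (star x) ξ - ρ (MulOpposite.op (star x)) ξ) (π y ξ) -
        inner ℂ ξ (π y (π x ξ - ρ (MulOpposite.op x) ξ)) := by
  have hadj : ∀ v w : H,
      inner ℂ (ρ (MulOpposite.op (star x)) v) w = inner ℂ v (ρ (MulOpposite.op x) w) := by
    intro v w
    rw [MulOpposite.op_star, map_star, ContinuousLinearMap.star_eq_adjoint,
      ContinuousLinearMap.adjoint_inner_left]
  have hswap : π y (ρ (MulOpposite.op x) ξ) = ρ (MulOpposite.op x) (π y ξ) :=
    congrArg (· ξ) (hcomm y (MulOpposite.op x)).eq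
  simp only [vectorState_apply, map_mul, mul_apply_eq_comp, inner_sub_left,
    map_sub, inner_sub_right, hadj, hswap]
  rw [map_star, ContinuousLinearMap.star_eq_adjoint, ContinuousLinearMap.adjoint_inner_left]
  ring

theorem norm_vectorState_mul_sub_mul_le (hcomm : ∀ (a : A) (b : Aᵐᵒᵖ), Commute (π a) (ρ b))
    (x y : A) :
    ‖vectorState π ξ (x * y) - vectorState π ξ (y * x)‖ ≤
      (‖π (star x) ξ - ρ (MulOpposite.op (star x)) ξ‖ + ‖π x ξ - ρ (MulOpposite.op x) ξ‖) *
        ‖y‖ * ‖ξ‖ := by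
  rw [vectorState_mul_sub_mul ξ ρ hcomm]
  set w := π (star x) ξ - ρ (MulOpposite.op (star x)) ξ
  set v := π x ξ - ρ (MulOpposite.op x) ξ
  calc ‖inner ℂ w (π y ξ) - inner ℂ ξ (π y v)‖
      ≤ ‖w‖ * ‖π y ξ‖ + ‖ξ‖ * ‖π y v‖ :=
        (norm_sub_le _ _).trans (add_le_add (norm_inner_le_norm _ _) (norm_inner_le_norm _ _))
    _ ≤ ‖w‖ * (‖y‖ * ‖ξ‖) + ‖ξ‖ * (‖y‖ * ‖v‖) := by
        gcongr <;> exact π.norm_apply_apply_le y _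
    _ = (‖w‖ + ‖v‖) * ‖y‖ * ‖ξ‖ := by ring

end VectorState

theorem exists_almostTracial_of_not_algPropertyT {A : Type} [CStarAlgebra A]
    (hT : ¬AlgPropertyT A) (F : Finset A) (ε : ℝ) (hε : 0 < ε) :
    ∃ φ ∈ stateSpace A, ∀ x ∈ F, φ ∈ almostTracialAt x ε := by
  classical
  by_contra hne
  refine hT ⟨F ∪ F.image star, ε / 2, half_pos hε, fun H _ _ _ π ρ hcomm ⟨ξ, hξ, hc⟩ => ?_⟩
  refine (hne ⟨vectorState π ξ, vectorState_mem_stateSpace π ξ hξ, fun x hx y => ?_⟩).elim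
  calc _ ≤ (ε / 2 + ε / 2) * ‖y‖ * ‖ξ‖ := by
        refine (norm_vectorState_mul_sub_mul_le ξ ρ hcomm x y).trans ?_
        gcongr
        · exact (hc _ (Finset.mem_union_right _ (Finset.mem_image_of_mem _ hx))).le
        · exact (hc _ (Finset.mem_union_left _ hx)).le
    _ = ε * ‖y‖ := by rw [hξ]; ring

/-- A unital C*-algebra admitting no tracial state has Property (T). -/
theorem algPropertyT_of_no_tracialState
    (A : Type) [NormedRing A] [StarRing A] [CStarRing A] [NormedAlgebra ℂ A]
    [StarModule ℂ A] [CompleteSpace A]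
    (h : ¬∃ τ : A →ₗ[ℂ] ℂ, IsTracialState A τ) :
    AlgPropertyT A := by
  let _ : CStarAlgebra A := ⟨⟩
  by_contra hT
  exact h (exists_isTracialState_of_forall_almostTracial
    (exists_almostTracial_of_not_algPropertyT hT))
end
end

section
/- Let 𝓗 be a complex Hilbert space and S a subset of the bounded operators on 𝓗 that is closed under taking adjoints. Suppose T is a nonzero compact operator on 𝓗 with aT = Ta for every a ∈ S. Then 𝓗 contains a nonzero finite-dimensional subspace K with a(K) ⊆ K for every a ∈ S. -/
/-! The operator `A = T* T` is compact, self-adjoint and nonzero, and commutes with `S`, because the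
commutant of a `*`-closed set is `*`-closed. By the spectral theory of compact self-adjoint
operators `A` has a nonzero eigenvalue `μ`, whose eigenspace is finite-dimensional; it is
invariant under every operator commuting with `A`. -/

open ContinuousLinearMap Module.End

section CompactSelfAdjoint

variable {𝕜 E : Type*} [RCLike 𝕜] [NormedAddCommGroup E] [InnerProductSpace 𝕜 E] [CompleteSpace E]

theorem IsCompactOperator.exists_hasEigenvalue_ne_zero {A : E →L[𝕜] E}
    (hA : IsCompactOperator A) (hA_sa : IsSelfAdjoint A) (hA0 : A ≠ 0) :
    ∃ μ ≠ 0, HasEigenvalue (A : Module.End 𝕜 E) μ := by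
  by_contra! h
  exact hA0 ((eq_zero_of_forall_hasEigenvalue_eq_zero hA hA_sa.isSymmetric).mp
    fun μ hμ => by_contra fun hμ0 => h μ hμ0 hμ)

theorem exists_finiteDimensional_invariant_of_isCompactOperator_mem_centralizer
    {S : Set (E →L[𝕜] E)} {A : E →L[𝕜] E} (hA : IsCompactOperator A) (hA_sa : IsSelfAdjoint A)
    (hA0 : A ≠ 0) (hAS : A ∈ S.centralizer) :
    ∃ K : Submodule 𝕜 E, K ≠ ⊥ ∧ FiniteDimensional 𝕜 K ∧ ∀ a ∈ S, ∀ ξ ∈ K, a ξ ∈ K := by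
  obtain ⟨μ, hμ0, hμ⟩ := hA.exists_hasEigenvalue_ne_zero hA_sa hA0
  refine ⟨eigenspace (A : Module.End 𝕜 E) μ, hasEigenvalue_iff.mp hμ,
    finite_dimensional_eigenspace hA μ hμ0, fun a ha ξ hξ => ?_⟩
  have hcomm : Commute (A : Module.End 𝕜 E) a := congrArg toLinearMap (hAS a ha).symm
  exact mapsTo_genEigenspace_of_comm hcomm μ 1 hξ

end CompactSelfAdjoint

/-- If a nonzero compact operator `T` commutes with a self-adjoint set `S` of bounded
operators, then there is a nonzero finite-dimensional subspace invariant under `S`. -/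
theorem exists_finiteDimensional_invariant_subspace_of_compact_commutant
    (H : Type) [NormedAddCommGroup H] [InnerProductSpace ℂ H] [CompleteSpace H]
    (S : Set (H →L[ℂ] H)) (hS : ∀ a ∈ S, star a ∈ S)
    (T : H →L[ℂ] H) (hT : IsCompact (closure (T '' Metric.closedBall (0 : H) 1)))
    (hT0 : T ≠ 0) (hcomm : ∀ a ∈ S, a * T = T * a) :
    ∃ K : Submodule ℂ H, K ≠ ⊥ ∧ FiniteDimensional ℂ K ∧
      ∀ a ∈ S, ∀ ξ ∈ K, a ξ ∈ K := by
  have hT_compact : IsCompactOperator T :=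
    (isCompactOperator_iff_isCompact_closure_image_closedBall (T : H →ₗ[ℂ] H) one_pos).mpr hT
  have hTS : T ∈ S.centralizer := Set.mem_centralizer_iff.mpr hcomm
  exact exists_finiteDimensional_invariant_of_isCompactOperator_mem_centralizer
    (hT_compact.clm_comp (star T)) (IsSelfAdjoint.star_mul_self T)
    ((CStarRing.star_mul_self_eq_zero_iff T).not.mpr hT0)
    (Set.mul_mem_centralizer (Set.star_mem_centralizer' hS hTS) hTS)
end

section
/- Let X be an uncountable compact metrizable topological space. Then the C*-algebra C(X) of continuous complex-valued functions on X (with the supremum norm, pointwise operations, and complex conjugation as involution) does not have Property (T). -/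
/-!
Two characters `φ, ψ` of a *-algebra `A` make `ℂ` a Hilbert bimodule via `a ξ b = φ a * ξ * ψ b`.
There the unit vector `1` is `(F, ε)`-central as soon as `φ` and `ψ` are `ε`-close on `F`, while
a nonzero central vector exists only if `φ = ψ`; so Property (T) isolates the characters from each
other. In `C(X)` the point evaluations are characters, distinct for distinct points, and they
depend pointwise continuously on the point. An infinite compact space has a non-isolated point
`p`, and evaluation at a point `x ≠ p` close enough to `p` is `ε`-close to evaluation at `p`
on `F`.
-/

noncomputable section

open scoped ENNReal ComplexOrder

open scoped Topology

section

variable {R A B : Type*} [CommSemiring R] [Semiring A] [Algebra R A] [Star A]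
  [Semiring B] [Algebra R B] [Star B]

def StarAlgHom.fromOpposite (f : A →⋆ₐ[R] B) (hf : ∀ x y, Commute (f x) (f y)) :
    Aᵐᵒᵖ →⋆ₐ[R] B :=
  { f.toAlgHom.fromOpposite hf with map_star' := fun a => map_star f a.unop }

@[simp]
theorem StarAlgHom.fromOpposite_apply (f : A →⋆ₐ[R] B) (hf : ∀ x y, Commute (f x) (f y))
    (a : Aᵐᵒᵖ) : f.fromOpposite hf a = f a.unop := rfl

end

theorem AlgPropertyT.exists_forall_eq_of_forall_norm_sub_lt {A : Type} [Ring A] [StarRing A]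
    [Algebra ℂ A] [StarModule ℂ A] (hT : AlgPropertyT A) :
    ∃ (F : Finset A) (ε : ℝ), 0 < ε ∧
      ∀ φ ψ : A →⋆ₐ[ℂ] ℂ, (∀ y ∈ F, ‖φ y - ψ y‖ < ε) → φ = ψ := by
  obtain ⟨F, ε, hε, hT⟩ := hT
  refine ⟨F, ε, hε, fun φ ψ hφψ => ?_⟩
  let π := (StarAlgHom.ofId ℂ (ℂ →L[ℂ] ℂ)).comp φ
  let ρ := (StarAlgHom.ofId ℂ (ℂ →L[ℂ] ℂ)).comp (ψ.fromOpposite fun _ _ => Commute.all _ _)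
  have hπ (a : A) (v : ℂ) : π a v = φ a * v := by simp [π, Algebra.algebraMap_eq_smul_one]
  have hρ (a : A) (v : ℂ) : ρ (MulOpposite.op a) v = ψ a * v := by
    simp [ρ, Algebra.algebraMap_eq_smul_one]
  obtain ⟨η, hη, hcentral⟩ := hT ℂ π ρ (fun a _ => Algebra.commutes (φ a) _)
    ⟨1, norm_one, fun y hy => by simpa [hπ, hρ] using hφψ y hy⟩
  ext a
  simpa [hπ, hρ, hη] using hcentral a

theorem exists_nhdsNE_neBot (X : Type*) [TopologicalSpace X] [CompactSpace X] [Infinite X] :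
    ∃ p : X, (𝓝[≠] p).NeBot := by
  obtain ⟨p, hp⟩ := Set.infinite_univ (α := X).exists_accPt_principal
  exact ⟨p, by simpa [AccPt] using hp⟩

theorem exists_ne_forall_dist_lt {X E : Type*} [TopologicalSpace X] [PseudoMetricSpace E]
    (p : X) [(𝓝[≠] p).NeBot] (F : Finset C(X, E)) {ε : ℝ} (hε : 0 < ε) :
    ∃ x ≠ p, ∀ f ∈ F, dist (f x) (f p) < ε := by
  have hnear : ∀ᶠ x in 𝓝[≠] p, ∀ f ∈ F, dist (f x) (f p) < ε :=
    (Filter.eventually_all_finset F).2 fun f _ =>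
      nhdsWithin_le_nhds (f.continuous.continuousAt.eventually (Metric.ball_mem_nhds _ hε))
  obtain ⟨x, hx, hxp⟩ := (hnear.and self_mem_nhdsWithin).exists
  exact ⟨x, hxp, hx⟩

theorem ContinuousMap.evalStarAlgHom_injective (X : Type*) [TopologicalSpace X] [T35Space X] :
    Function.Injective fun x : X => ContinuousMap.evalStarAlgHom ℂ ℂ x := by
  intro x y hxy
  by_contra hne
  obtain ⟨f, hf, hfxy⟩ := separatesPoints_continuous_of_t35Space hne
  let g : C(X, ℂ) := ⟨fun z => (f z : ℂ), Complex.continuous_ofReal.comp hf⟩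
  exact hfxy (by simpa [g] using DFunLike.congr_fun hxy g)

/-- For an uncountable compact metrizable space `X`, the abelian C*-algebra `C(X)` of
continuous complex-valued functions on `X` does not have Property (T). -/
theorem continuousMap_not_algPropertyT
    (X : Type) [TopologicalSpace X] [CompactSpace X]
    [TopologicalSpace.MetrizableSpace X] [Uncountable X] :
    ¬AlgPropertyT C(X, ℂ) := by
  intro hT
  obtain ⟨F, ε, hε, hchar⟩ := hT.exists_forall_eq_of_forall_norm_sub_lt
  obtain ⟨p, hp⟩ := exists_nhdsNE_neBot X
  obtain ⟨x, hxp, hx⟩ := exists_ne_forall_dist_lt p F hε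
  exact hxp <| ContinuousMap.evalStarAlgHom_injective X <|
    hchar _ _ fun f hf => by simpa [dist_eq_norm] using hx f hf
end
end
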